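/- arXiv:1610.05950 — 3 statements merged into one kernel-verified Lean document; each statement's English description precedes it below -/
import Mathlib

section
/- Let X and Z be compact metric spaces equipped with their Borel σ-algebras, f : X → Z a continuous function, k_z : Z × Z → ℝ a continuous symmetric kernel, and k_x : X × X → ℝ a continuous symmetric kernel with the following property (satisfied by c₀-universal kernels): for every constant C > 0 and every sequence (ν_n) of finite signed Borel measures on X with total variation norm ‖ν_n‖_TV ≤ C and E_{k_x}(ν_n) → 0, one has ∫ g dν_n → 0 for every continuous g : X → ℝ. Let P be a Borel probability measure on X and, for each n, let x_{n,1},…,x_{n,m_n} ∈ X and w_{n,1},…,w_{n,m_n} ∈ ℝ satisfy Σ_i |w_{n,i}| ≤ C with C independent of n. Set ν_n := Σ_i w_{n,i} δ_{x_{n,i}} − P. If E_{k_x}(ν_n) → 0 as n → ∞, then E_{k_z}(f_*ν_n) → 0, where f_*ν_n = Σ_i w_{n,i} δ_{f(x_{n,i})} − f_*P is the pushforward of ν_n under f. -/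
open MeasureTheory Filter Topology

/-- Integral of a real-valued function against a finite signed measure,
defined via the Jordan decomposition. -/
noncomputable def sintegral {X : Type*} [MeasurableSpace X]
    (ν : SignedMeasure X) (g : X → ℝ) : ℝ :=
  (∫ x, g x ∂ν.toJordanDecomposition.posPart) -
    (∫ x, g x ∂ν.toJordanDecomposition.negPart)

/-- The kernel energy `E_k(ν) = ∬ k(x,x') dν(x) dν(x')` of a finite signed measure. -/
noncomputable def energy {X : Type*} [MeasurableSpace X]
    (k : X × X → ℝ) (ν : SignedMeasure X) : ℝ :=
  sintegral ν fun x => sintegral ν fun y => k (x, y)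

/-!
The universality hypothesis turns energy convergence of the uniformly TV-bounded errors `ν n`
into weak convergence `ν n → 0`, and weak convergence survives the pushforward by the continuous
map `f`. For a weakly null sequence `μ n` of uniformly bounded variation on a compact space, the
potentials `z ↦ ∫ k(z, ·) dμ n` tend to `0` pointwise and are equicontinuous, because
`z ↦ k(z, ·)` is continuous into `C(Z, ℝ)` and the functionals `∫ · dμ n` are uniformly Lipschitz
on `C(Z, ℝ)`. By Ascoli they tend to `0` uniformly, and integrating once more against `μ n`
sends the energy to `0`.
-/

open Set
open scoped NNReal

lemma div_add_one_mul_lt {ε M : ℝ} (hε : 0 < ε) (hM : 0 ≤ M) : ε / (M + 1) * M < ε := by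
  rw [div_mul_eq_mul_div, div_lt_iff₀ (by positivity)]
  nlinarith

namespace MeasureTheory.SignedMeasure

section Measurable

variable {α β : Type*} [MeasurableSpace α] [MeasurableSpace β]

lemma posPart_add_eq_add_negPart_of_eq_sub {ν : SignedMeasure α} {μ₁ μ₂ : Measure α}
    [IsFiniteMeasure μ₁] [IsFiniteMeasure μ₂]
    (hν : ν = μ₁.toSignedMeasure - μ₂.toSignedMeasure) :
    ν.toJordanDecomposition.posPart + μ₂ = μ₁ + ν.toJordanDecomposition.negPart := by
  rw [← Measure.toSignedMeasure_eq_toSignedMeasure_iff, Measure.toSignedMeasure_add,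
    Measure.toSignedMeasure_add, ← sub_eq_sub_iff_add_eq_add, ← hν]
  exact ν.toSignedMeasure_toJordanDecomposition

lemma sintegral_eq_integral_sub_integral {ν : SignedMeasure α} {μ₁ μ₂ : Measure α}
    [IsFiniteMeasure μ₁] [IsFiniteMeasure μ₂]
    (hν : ν = μ₁.toSignedMeasure - μ₂.toSignedMeasure)
    {g : α → ℝ} (hg : Measurable g) {B : ℝ} (hB : ∀ a, ‖g a‖ ≤ B) :
    sintegral ν g = ∫ a, g a ∂μ₁ - ∫ a, g a ∂μ₂ := by
  have hint (μ : Measure α) [IsFiniteMeasure μ] : Integrable g μ :=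
    .of_bound hg.aestronglyMeasurable B (.of_forall hB)
  have h := congrArg (fun μ => ∫ a, g a ∂μ) (posPart_add_eq_add_negPart_of_eq_sub hν)
  simp only [integral_add_measure (hint _) (hint _)] at h
  rw [sintegral]
  linarith

lemma sintegral_sub (ν : SignedMeasure α) {g h : α → ℝ} (hg : Measurable g) (hh : Measurable h)
    {B B' : ℝ} (hB : ∀ a, ‖g a‖ ≤ B) (hB' : ∀ a, ‖h a‖ ≤ B') :
    sintegral ν (fun a => g a - h a) = sintegral ν g - sintegral ν h := by
  have hint (μ : Measure α) [IsFiniteMeasure μ] : Integrable g μ ∧ Integrable h μ :=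
    ⟨.of_bound hg.aestronglyMeasurable B (.of_forall hB),
      .of_bound hh.aestronglyMeasurable B' (.of_forall hB')⟩
  simp only [sintegral]
  rw [integral_sub (hint _).1 (hint _).2, integral_sub (hint _).1 (hint _).2]
  ring

lemma norm_sintegral_le (ν : SignedMeasure α) {g : α → ℝ} {B : ℝ} (hB : ∀ a, ‖g a‖ ≤ B) :
    ‖sintegral ν g‖ ≤ B * (ν.totalVariation univ).toReal := by
  have hpos := norm_integral_le_of_norm_le_const
    (μ := ν.toJordanDecomposition.posPart) (.of_forall hB)
  have hneg := norm_integral_le_of_norm_le_const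
    (μ := ν.toJordanDecomposition.negPart) (.of_forall hB)
  rw [totalVariation, Measure.add_apply, ENNReal.toReal_add (measure_ne_top _ _)
    (measure_ne_top _ _), mul_add]
  exact (norm_sub_le _ _).trans (add_le_add hpos hneg)

lemma map_eq_map_posPart_sub_map_negPart (ν : SignedMeasure α) {f : α → β}
    (hf : Measurable f) :
    ν.map f = (ν.toJordanDecomposition.posPart.map f).toSignedMeasure -
      (ν.toJordanDecomposition.negPart.map f).toSignedMeasure := by
  ext s hs
  rw [VectorMeasure.map_apply _ hf hs, _root_.sub_apply,
    Measure.toSignedMeasure_apply_measurable hs, Measure.toSignedMeasure_apply_measurable hs,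
    Measure.real, Measure.real, Measure.map_apply hf hs, Measure.map_apply hf hs]
  conv_lhs => rw [← ν.toSignedMeasure_toJordanDecomposition]
  exact Measure.toSignedMeasure_sub_apply (hf hs)

lemma sintegral_map (ν : SignedMeasure α) {f : α → β} (hf : Measurable f) {g : β → ℝ}
    (hg : Measurable g) {B : ℝ} (hB : ∀ b, ‖g b‖ ≤ B) :
    sintegral (ν.map f) g = sintegral ν (g ∘ f) := by
  rw [sintegral_eq_integral_sub_integral (map_eq_map_posPart_sub_map_negPart ν hf) hg hB,
    integral_map hf.aemeasurable hg.aestronglyMeasurable,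
    integral_map hf.aemeasurable hg.aestronglyMeasurable]
  rfl

lemma totalVariation_map_univ_le (ν : SignedMeasure α) {f : α → β} (hf : Measurable f) :
    SignedMeasure.totalVariation (ν.map f) univ ≤ ν.totalVariation univ := by
  rw [totalVariation_eq_variation, totalVariation_eq_variation]
  calc (ν.map f).variation univ ≤ ν.variation.map f univ := VectorMeasure.variation_map_le univ
    _ = ν.variation univ := by rw [Measure.map_apply hf .univ, preimage_univ]

lemma totalVariation_univ_sum_smul_dirac_sub_le {ι : Type*} [Fintype ι] (w : ι → ℝ)
    (x : ι → α) (μ : Measure α) [IsFiniteMeasure μ] :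
    ((∑ i, w i • (Measure.dirac (x i)).toSignedMeasure) - μ.toSignedMeasure).totalVariation univ
      ≤ ENNReal.ofReal (∑ i, |w i|) + μ univ := by
  rw [totalVariation_eq_variation]
  calc _ ≤ (∑ i, (w i • (Measure.dirac (x i)).toSignedMeasure).variation
        + μ.toSignedMeasure.variation) univ :=
        (VectorMeasure.variation_sub_le.trans
          (add_le_add_left (VectorMeasure.variation_finsetSum_le _ _) _)) univ
    _ = ENNReal.ofReal (∑ i, |w i|) + μ univ := by
      simp [VectorMeasure.variation_smul, ENNReal.ofReal_sum_of_nonneg,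
        ← Real.enorm_eq_ofReal_abs, enorm_eq_nnnorm]

end Measurable

section Compact

variable {Z : Type*} [TopologicalSpace Z] [CompactSpace Z] [MeasurableSpace Z]
  [OpensMeasurableSpace Z]

lemma norm_sintegral_sub_le (μ : SignedMeasure Z) (g h : C(Z, ℝ)) :
    ‖sintegral μ g - sintegral μ h‖ ≤ ‖g - h‖ * (μ.totalVariation univ).toReal := by
  rw [← sintegral_sub μ g.continuous.measurable h.continuous.measurable g.norm_coe_le_norm
    h.norm_coe_le_norm]
  exact norm_sintegral_le μ (g - h).norm_coe_le_norm

variable {ι : Type*} {l : Filter ι} {μ : ι → SignedMeasure Z} {M : ℝ≥0}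

lemma tendstoUniformly_sintegral_of_forall_tendsto_sintegral
    (hM : ∀ i, (μ i).totalVariation univ ≤ M)
    (hweak : ∀ g : Z → ℝ, Continuous g → Tendsto (fun i => sintegral (μ i) g) l (𝓝 0))
    {k : Z × Z → ℝ} (hk : Continuous k) :
    TendstoUniformly (fun i z => sintegral (μ i) fun z' => k (z, z')) 0 l := by
  set Φ : C(Z, C(Z, ℝ)) := ContinuousMap.curry ⟨k, hk⟩
  have hequi : Equicontinuous fun i z => sintegral (μ i) (Φ z) := by
    intro z₀
    rw [Metric.equicontinuousAt_iff_right]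
    intro ε hε
    filter_upwards [Metric.tendsto_nhds.1 (Φ.continuous.tendsto z₀) (ε / (M + 1))
      (by positivity)] with z hz i
    calc dist (sintegral (μ i) (Φ z₀)) (sintegral (μ i) (Φ z))
        ≤ ‖Φ z₀ - Φ z‖ * M := (norm_sintegral_sub_le _ _ _).trans
          (by gcongr; exact ENNReal.toReal_le_coe_of_le_coe (hM i))
      _ ≤ ε / (M + 1) * M := by gcongr; rw [← dist_eq_norm, dist_comm]; exact hz.le
      _ < ε := div_add_one_mul_lt hε M.coe_nonneg
  exact UniformFun.tendsto_iff_tendstoUniformly.1 <| (hequi.tendsto_uniformFun_iff_pi l 0).2 <|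
    tendsto_pi_nhds.2 fun z => hweak _ (Φ z).continuous

lemma tendsto_energy_of_forall_tendsto_sintegral
    (hM : ∀ i, (μ i).totalVariation univ ≤ M)
    (hweak : ∀ g : Z → ℝ, Continuous g → Tendsto (fun i => sintegral (μ i) g) l (𝓝 0))
    {k : Z × Z → ℝ} (hk : Continuous k) :
    Tendsto (fun i => energy k (μ i)) l (𝓝 0) := by
  rw [Metric.tendsto_nhds]
  intro ε hε
  filter_upwards [Metric.tendstoUniformly_iff.1
    (tendstoUniformly_sintegral_of_forall_tendsto_sintegral hM hweak hk) (ε / (M + 1))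
    (by positivity)] with i hi
  calc dist (energy k (μ i)) 0 = ‖energy k (μ i)‖ := dist_zero_right _
    _ ≤ ε / (M + 1) * M := by
      refine (norm_sintegral_le (B := ε / (M + 1)) _ fun z => ?_).trans ?_
      · simpa [dist_comm, dist_eq_norm] using (hi z).le
      · gcongr; exact ENNReal.toReal_le_coe_of_le_coe (hM i)
    _ < ε := div_add_one_mul_lt hε M.coe_nonneg

end Compact

end MeasureTheory.SignedMeasure

theorem consistency_of_mean_embedding_of_function_general
    {X Z : Type*} [MetricSpace X] [MeasurableSpace X] [BorelSpace X]
    [MetricSpace Z] [CompactSpace Z] [MeasurableSpace Z] [BorelSpace Z]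
    (f : X → Z) (hf : Continuous f)
    (kz : Z × Z → ℝ) (hkz_cont : Continuous kz)
    (kx : X × X → ℝ)
    (hkx_univ : ∀ C' > (0 : ℝ), ∀ ρ : ℕ → SignedMeasure X,
      (∀ n, (ρ n).totalVariation Set.univ ≤ ENNReal.ofReal C') →
      Tendsto (fun n => energy kx (ρ n)) atTop (𝓝 0) →
      ∀ g : X → ℝ, Continuous g →
        Tendsto (fun n => sintegral (ρ n) g) atTop (𝓝 0))
    (P : Measure X) [IsProbabilityMeasure P]
    (C : ℝ) (m : ℕ → ℕ) (x : (n : ℕ) → Fin (m n) → X) (w : (n : ℕ) → Fin (m n) → ℝ)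
    (hw : ∀ n, ∑ i, |w n i| ≤ C)
    (ν : ℕ → SignedMeasure X)
    (hν : ∀ n, ν n =
      (∑ i, w n i • (Measure.dirac (x n i)).toSignedMeasure) - P.toSignedMeasure)
    (hconv : Tendsto (fun n => energy kx (ν n)) atTop (𝓝 0)) :
    Tendsto (fun n => energy kz ((ν n).map f)) atTop (𝓝 0) := by
  have hC : 0 ≤ C := (Finset.sum_nonneg fun i _ => abs_nonneg (w 0 i)).trans (hw 0)
  have htv : ∀ n, (ν n).totalVariation univ ≤ ENNReal.ofReal (C + 1) := fun n => by
    rw [hν n, ENNReal.ofReal_add hC zero_le_one, ENNReal.ofReal_one, ← measure_univ (μ := P)]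
    exact (SignedMeasure.totalVariation_univ_sum_smul_dirac_sub_le _ _ _).trans
      (add_le_add_left (ENNReal.ofReal_le_ofReal (hw n)) _)
  have hweak := hkx_univ (C + 1) (by linarith) ν htv hconv
  refine SignedMeasure.tendsto_energy_of_forall_tendsto_sintegral
    (fun n => (SignedMeasure.totalVariation_map_univ_le _ hf.measurable).trans (htv n))
    (fun g hg => ?_) hkz_cont
  obtain ⟨B, hB⟩ := isCompact_univ.exists_bound_of_continuousOn hg.continuousOn
  simpa only [SignedMeasure.sintegral_map _ hf.measurable hg.measurable fun z => hB z trivial]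
    using hweak (g ∘ f) (hg.comp hf)

/-- Theorem 1 of the paper: consistency of the mean-embedding estimator of `f(X)`.
If `k_x` has the property (satisfied by `c₀`-universal kernels) that energy convergence
of a uniformly TV-bounded sequence of signed measures implies weak convergence, and if
the energies `E_{k_x}(ν_n)` of the estimation errors `ν_n = Σ_i w_{n,i} δ_{x_{n,i}} − P`
tend to `0`, then the energies `E_{k_z}(f_* ν_n)` of the pushforward errors tend to `0`. -/
theorem consistency_of_mean_embedding_of_function
    {X Z : Type*} [MetricSpace X] [CompactSpace X] [MeasurableSpace X] [BorelSpace X]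
    [MetricSpace Z] [CompactSpace Z] [MeasurableSpace Z] [BorelSpace Z]
    (f : X → Z) (hf : Continuous f)
    (kz : Z × Z → ℝ) (hkz_cont : Continuous kz)
    (hkz_symm : ∀ z z', kz (z, z') = kz (z', z))
    (kx : X × X → ℝ) (hkx_cont : Continuous kx)
    (hkx_symm : ∀ x x', kx (x, x') = kx (x', x))
    (hkx_univ : ∀ C' > (0 : ℝ), ∀ ρ : ℕ → SignedMeasure X,
      (∀ n, (ρ n).totalVariation Set.univ ≤ ENNReal.ofReal C') →
      Tendsto (fun n => energy kx (ρ n)) atTop (𝓝 0) →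
      ∀ g : X → ℝ, Continuous g →
        Tendsto (fun n => sintegral (ρ n) g) atTop (𝓝 0))
    (P : Measure X) [IsProbabilityMeasure P]
    (C : ℝ) (m : ℕ → ℕ) (x : (n : ℕ) → Fin (m n) → X) (w : (n : ℕ) → Fin (m n) → ℝ)
    (hw : ∀ n, ∑ i, |w n i| ≤ C)
    (ν : ℕ → SignedMeasure X)
    (hν : ∀ n, ν n =
      (∑ i, w n i • (Measure.dirac (x n i)).toSignedMeasure) - P.toSignedMeasure)
    (hconv : Tendsto (fun n => energy kx (ν n)) atTop (𝓝 0)) :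
    Tendsto (fun n => energy kz ((ν n).map f)) atTop (𝓝 0) :=
  consistency_of_mean_embedding_of_function_general f hf kz hkz_cont kx hkx_univ P C m x w hw ν hν
    hconv
end

section
/- Let X be a compact metric space and k̃ : X × X → ℝ a continuous function. Let (ν_n) be a sequence of finite signed Borel measures on X whose total variation norms are uniformly bounded: ‖ν_n‖_TV ≤ C for all n. If ∫ g dν_n → 0 for every continuous function g : X → ℝ, then ∬ k̃(x,x') dν_n(x) dν_n(x') → 0 as n → ∞. -/
open MeasureTheory Filter Topology

section Aux

variable {X : Type*} [MeasurableSpace X]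

lemma sintegral_sub_aux (ν : SignedMeasure X) {f g : X → ℝ}
    (hf₁ : Integrable f ν.toJordanDecomposition.posPart)
    (hf₂ : Integrable f ν.toJordanDecomposition.negPart)
    (hg₁ : Integrable g ν.toJordanDecomposition.posPart)
    (hg₂ : Integrable g ν.toJordanDecomposition.negPart) :
    sintegral ν (fun x => f x - g x) = sintegral ν f - sintegral ν g := by
  simp only [sintegral, integral_sub hf₁ hg₁, integral_sub hf₂ hg₂]
  ring

lemma sintegral_const_mul_aux (ν : SignedMeasure X) (c : ℝ) (f : X → ℝ) :
    sintegral ν (fun x => c * f x) = c * sintegral ν f := by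
  simp only [sintegral, integral_const_mul]
  ring

lemma sintegral_finset_sum_aux {ι : Type*} (ν : SignedMeasure X) (t : Finset ι) (f : ι → X → ℝ)
    (h₁ : ∀ i ∈ t, Integrable (f i) ν.toJordanDecomposition.posPart)
    (h₂ : ∀ i ∈ t, Integrable (f i) ν.toJordanDecomposition.negPart) :
    sintegral ν (fun x => ∑ i ∈ t, f i x) = ∑ i ∈ t, sintegral ν (f i) := by
  simp only [sintegral, integral_finset_sum t h₁, integral_finset_sum t h₂,
    Finset.sum_sub_distrib]

lemma abs_sintegral_le_aux (ν : SignedMeasure X) {f : X → ℝ} {M : ℝ}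
    (hf : ∀ x, |f x| ≤ M) :
    |sintegral ν f| ≤ (ν.totalVariation Set.univ).toReal * M := by
  set μp := ν.toJordanDecomposition.posPart with hμp
  set μn := ν.toJordanDecomposition.negPart with hμn
  have h₁ : ‖∫ x, f x ∂μp‖ ≤ M * (μp Set.univ).toReal :=
    norm_integral_le_of_norm_le_const
      (ae_of_all _ fun x => by simpa [Real.norm_eq_abs] using hf x)
  have h₂ : ‖∫ x, f x ∂μn‖ ≤ M * (μn Set.univ).toReal :=
    norm_integral_le_of_norm_le_const
      (ae_of_all _ fun x => by simpa [Real.norm_eq_abs] using hf x)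
  have hTV : (ν.totalVariation Set.univ).toReal
      = (μp Set.univ).toReal + (μn Set.univ).toReal := by
    simp [SignedMeasure.totalVariation, Measure.add_apply,
      ENNReal.toReal_add (measure_ne_top _ _) (measure_ne_top _ _), ← hμp, ← hμn]
  have h3 : |sintegral ν f| ≤ ‖∫ x, f x ∂μp‖ + ‖∫ x, f x ∂μn‖ := by
    rw [sintegral, ← Real.norm_eq_abs]
    exact norm_sub_le _ _
  rw [hTV]
  nlinarith [h3, h₁, h₂]

lemma continuous_integrable_aux {Y : Type*} [MetricSpace Y] [CompactSpace Y]
    [MeasurableSpace Y] [BorelSpace Y] {μ : Measure Y} [IsFiniteMeasure μ]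
    {f : Y → ℝ} (hf : Continuous f) : Integrable f μ := by
  obtain ⟨M, hM⟩ := isCompact_univ.exists_bound_of_continuousOn hf.continuousOn
  exact ⟨hf.aestronglyMeasurable,
    HasFiniteIntegral.of_bounded (C := M) (ae_of_all _ fun x => hM x trivial)⟩

end Aux

/-- On a compact metric space, if a uniformly TV-bounded sequence of finite signed
Borel measures converges weakly to 0, then its kernel energy with respect to any
continuous kernel converges to 0. -/
theorem energy_tendsto_zero_of_weak_tendsto_zero
    {X : Type*} [MetricSpace X] [CompactSpace X] [MeasurableSpace X] [BorelSpace X]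
    (k : X × X → ℝ) (hk : Continuous k)
    (ν : ℕ → SignedMeasure X) (C : ℝ)
    (hTV : ∀ n, (ν n).totalVariation Set.univ ≤ ENNReal.ofReal C)
    (hweak : ∀ g : X → ℝ, Continuous g →
      Tendsto (fun n => sintegral (ν n) g) atTop (𝓝 0)) :
    Tendsto (fun n => energy k (ν n)) atTop (𝓝 0) := by
  -- bound on the total variations
  set Cb : ℝ := (ENNReal.ofReal C).toReal with hCb
  have hCb0 : 0 ≤ Cb := ENNReal.toReal_nonneg
  have hTVb : ∀ n, ((ν n).totalVariation Set.univ).toReal ≤ Cb := fun n =>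
    ENNReal.toReal_mono ENNReal.ofReal_ne_top (hTV n)
  -- bound on k
  obtain ⟨K, hK⟩ := isCompact_univ.exists_bound_of_continuousOn hk.continuousOn
  have hKb : ∀ p : X × X, |k p| ≤ K := fun p => by
    simpa [Real.norm_eq_abs] using hK p trivial
  -- integrability of continuous functions against all the parts
  have int_pos : ∀ (n : ℕ) (f : X → ℝ), Continuous f →
      Integrable f (ν n).toJordanDecomposition.posPart := fun n f hf =>
    continuous_integrable_aux hf
  have int_neg : ∀ (n : ℕ) (f : X → ℝ), Continuous f →
      Integrable f (ν n).toJordanDecomposition.negPart := fun n f hf =>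
    continuous_integrable_aux hf
  rw [NormedAddCommGroup.tendsto_nhds_zero]
  intro ε hε
  set ε' : ℝ := ε / (2 * (Cb + 1) ^ 2) with hε'def
  have hε' : 0 < ε' := by
    apply div_pos hε
    positivity
  -- uniform continuity of k
  have huc : UniformContinuous k := CompactSpace.uniformContinuous_of_continuous hk
  obtain ⟨δ, hδ, hδk⟩ := Metric.uniformContinuous_iff.mp huc ε' hε'
  -- finite cover by balls of radius δ
  have hcover : (Set.univ : Set X) ⊆ ⋃ x : X, Metric.ball x δ := fun x _ =>
    Set.mem_iUnion.2 ⟨x, by simpa using hδ⟩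
  obtain ⟨t, ht⟩ := isCompact_univ.elim_finite_subcover (fun x : X => Metric.ball x δ)
    (fun _ => Metric.isOpen_ball) hcover
  -- partition of unity
  set d : X → X → ℝ := fun i x => max (δ - dist x i) 0 with hd
  have hd_cont : ∀ i, Continuous (d i) := fun i =>
    ((continuous_const.sub (continuous_id.dist continuous_const)).max
      continuous_const)
  have hd_nonneg : ∀ i x, 0 ≤ d i x := fun i x => le_max_right _ _
  set s : X → ℝ := fun x => ∑ i ∈ t, d i x with hs
  have hs_cont : Continuous s := continuous_finset_sum t fun i _ => hd_cont i
  have hs_pos : ∀ x, 0 < s x := by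
    intro x
    obtain ⟨i, hit, hxi⟩ := Set.mem_iUnion₂.mp (ht (Set.mem_univ x))
    refine Finset.sum_pos' (fun j _ => hd_nonneg j x) ⟨i, hit, ?_⟩
    have : dist x i < δ := Metric.mem_ball.mp hxi
    simp only [hd]
    exact lt_max_of_lt_left (by linarith)
  set φ : X → X → ℝ := fun i x => d i x / s x with hφ
  have hφ_cont : ∀ i, Continuous (φ i) := fun i =>
    (hd_cont i).div hs_cont fun x => (hs_pos x).ne'
  have hφ_nonneg : ∀ i x, 0 ≤ φ i x := fun i x =>
    div_nonneg (hd_nonneg i x) (hs_pos x).le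
  have hφ_sum : ∀ x, ∑ i ∈ t, φ i x = 1 := by
    intro x
    simp only [hφ, ← Finset.sum_div]
    show s x / s x = 1
    exact div_self (hs_pos x).ne'
  have hφ_supp : ∀ i x, φ i x ≠ 0 → dist x i < δ := by
    intro i x hne
    by_contra h
    push_neg at h
    apply hne
    have : d i x = 0 := max_eq_right (by linarith)
    simp [hφ, this]
  -- the approximating kernel
  set g : X → X → ℝ := fun x y => ∑ i ∈ t, φ i x * k (i, y) with hg
  have hg_cont : ∀ x, Continuous fun y => g x y := fun x =>
    continuous_finset_sum t fun i _ =>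
      continuous_const.mul (hk.comp (Continuous.prodMk_right i))
  -- pointwise approximation
  have happrox : ∀ x y, |k (x, y) - g x y| ≤ ε' := by
    intro x y
    have hky : k (x, y) = ∑ i ∈ t, φ i x * k (x, y) := by
      rw [← Finset.sum_mul, hφ_sum, one_mul]
    rw [hky]
    rw [show (∑ i ∈ t, φ i x * k (x, y)) - g x y
        = ∑ i ∈ t, φ i x * (k (x, y) - k (i, y)) by
      simp only [hg, ← Finset.sum_sub_distrib, mul_sub]]
    calc |∑ i ∈ t, φ i x * (k (x, y) - k (i, y))|
        ≤ ∑ i ∈ t, |φ i x * (k (x, y) - k (i, y))| := Finset.abs_sum_le_sum_abs _ _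
      _ ≤ ∑ i ∈ t, φ i x * ε' := by
          apply Finset.sum_le_sum
          intro i _
          rw [abs_mul, abs_of_nonneg (hφ_nonneg i x)]
          by_cases hzero : φ i x = 0
          · simp [hzero]
          · apply mul_le_mul_of_nonneg_left _ (hφ_nonneg i x)
            have hdist : dist (x, y) (i, y) < δ := by
              rw [Prod.dist_eq]
              simp only [dist_self]
              exact max_lt (hφ_supp i x hzero) hδ
            have := hδk hdist
            rw [Real.dist_eq] at this
            exact this.le
      _ = ε' := by rw [← Finset.sum_mul, hφ_sum, one_mul]
  -- inner integrals
  set F : ℕ → X → ℝ := fun n x => sintegral (ν n) fun y => k (x, y) with hF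
  set G : ℕ → X → ℝ := fun n x => ∑ i ∈ t, φ i x * F n i with hG
  -- F n is continuous
  have hF_cont : ∀ n, Continuous (F n) := by
    intro n
    have h1 : Continuous fun x => ∫ y, k (x, y) ∂(ν n).toJordanDecomposition.posPart := by
      apply continuous_of_dominated (bound := fun _ => K)
      · exact fun x => ((hk.comp (Continuous.prodMk_right x)).aestronglyMeasurable)
      · exact fun x => ae_of_all _ fun y => by simpa [Real.norm_eq_abs] using hKb (x, y)
      · exact integrable_const K
      · exact ae_of_all _ fun y => hk.comp (continuous_id.prodMk continuous_const)
    have h2 : Continuous fun x => ∫ y, k (x, y) ∂(ν n).toJordanDecomposition.negPart := by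
      apply continuous_of_dominated (bound := fun _ => K)
      · exact fun x => ((hk.comp (Continuous.prodMk_right x)).aestronglyMeasurable)
      · exact fun x => ae_of_all _ fun y => by simpa [Real.norm_eq_abs] using hKb (x, y)
      · exact integrable_const K
      · exact ae_of_all _ fun y => hk.comp (continuous_id.prodMk continuous_const)
    exact h1.sub h2
  have hG_cont : ∀ n, Continuous (G n) :=
    fun n => continuous_finset_sum t fun i _ => (hφ_cont i).mul continuous_const
  -- G n x is the inner integral of g
  have hGinner : ∀ n x, G n x = sintegral (ν n) fun y => g x y := by
    intro n x
    simp only [hg]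
    rw [sintegral_finset_sum_aux (ν n) t (fun i y => φ i x * k (i, y))
      (fun i _ => int_pos n _ (continuous_const.mul (hk.comp (Continuous.prodMk_right i))))
      (fun i _ => int_neg n _ (continuous_const.mul (hk.comp (Continuous.prodMk_right i))))]
    simp only [hG]
    refine (Finset.sum_congr rfl fun i _ => ?_).symm
    rw [sintegral_const_mul_aux]
  -- |F n x - G n x| ≤ Cb * ε'
  have hFG : ∀ n x, |F n x - G n x| ≤ Cb * ε' := by
    intro n x
    rw [hGinner n x]
    show |(sintegral (ν n) fun y => k (x, y)) - sintegral (ν n) fun y => g x y| ≤ Cb * ε'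
    rw [← sintegral_sub_aux (ν n)
      (int_pos n (fun y => k (x, y)) (hk.comp (Continuous.prodMk_right x)))
      (int_neg n (fun y => k (x, y)) (hk.comp (Continuous.prodMk_right x)))
      (int_pos n _ (hg_cont x)) (int_neg n _ (hg_cont x))]
    calc |sintegral (ν n) fun y => k (x, y) - g x y|
        ≤ ((ν n).totalVariation Set.univ).toReal * ε' :=
          abs_sintegral_le_aux (ν n) fun y => happrox x y
      _ ≤ Cb * ε' := mul_le_mul_of_nonneg_right (hTVb n) hε'.le
  -- energy error bound
  have hEnergyErr : ∀ n, |sintegral (ν n) (F n) - sintegral (ν n) (G n)| ≤ Cb * (Cb * ε') := by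
    intro n
    rw [← sintegral_sub_aux (ν n)
      (int_pos n _ (hF_cont n)) (int_neg n _ (hF_cont n))
      (int_pos n _ (hG_cont n)) (int_neg n _ (hG_cont n))]
    calc |sintegral (ν n) fun x => F n x - G n x|
        ≤ ((ν n).totalVariation Set.univ).toReal * (Cb * ε') :=
          abs_sintegral_le_aux (ν n) fun x => hFG n x
      _ ≤ Cb * (Cb * ε') :=
          mul_le_mul_of_nonneg_right (hTVb n) (by positivity)
  -- the main term tends to zero
  have hFbound : ∀ n i, |F n i| ≤ Cb * K := by
    intro n i
    calc |F n i| ≤ ((ν n).totalVariation Set.univ).toReal * K :=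
          abs_sintegral_le_aux (ν n) fun y => hKb (i, y)
      _ ≤ Cb * K := by
          apply mul_le_mul_of_nonneg_right (hTVb n)
          exact le_trans (abs_nonneg _) (hKb (i, i))
  have hGsint : ∀ n, sintegral (ν n) (G n) = ∑ i ∈ t, F n i * sintegral (ν n) (φ i) := by
    intro n
    simp only [hG]
    rw [sintegral_finset_sum_aux (ν n) t (fun i x => φ i x * F n i)
      (fun i _ => int_pos n _ ((hφ_cont i).mul continuous_const))
      (fun i _ => int_neg n _ ((hφ_cont i).mul continuous_const))]
    refine Finset.sum_congr rfl fun i _ => ?_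
    rw [show (fun x => φ i x * F n i) = fun x => F n i * φ i x from
      funext fun x => mul_comm _ _, sintegral_const_mul_aux]
  have hGtend : Tendsto (fun n => sintegral (ν n) (G n)) atTop (𝓝 0) := by
    simp only [hGsint]
    rw [show (0 : ℝ) = ∑ i ∈ t, (0 : ℝ) by simp]
    apply tendsto_finset_sum
    intro i _
    have hφt : Tendsto (fun n => sintegral (ν n) (φ i)) atTop (𝓝 0) :=
      hweak (φ i) (hφ_cont i)
    apply squeeze_zero_norm (fun n => ?_) (by
      simpa using (tendsto_const_nhds (x := Cb * K)).mul hφt.norm : Tendsto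
        (fun n => Cb * K * ‖sintegral (ν n) (φ i)‖) atTop (𝓝 0))
    rw [Real.norm_eq_abs, abs_mul]
    exact mul_le_mul_of_nonneg_right (hFbound n i) (abs_nonneg _)
  -- conclusion
  have hεsplit : Cb * (Cb * ε') < ε / 2 := by
    rw [hε'def]
    rw [show Cb * (Cb * (ε / (2 * (Cb + 1) ^ 2))) = Cb ^ 2 * ε / (2 * (Cb + 1) ^ 2) by ring]
    rw [div_lt_div_iff₀ (by positivity) (by norm_num : (0:ℝ) < 2)]
    nlinarith [hε, hCb0, mul_nonneg hCb0 hε.le]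
  have hGev : ∀ᶠ n in atTop, |sintegral (ν n) (G n)| < ε / 2 := by
    have := hGtend
    rw [NormedAddCommGroup.tendsto_nhds_zero] at this
    filter_upwards [this (ε / 2) (by linarith)] with n hn
    simpa [Real.norm_eq_abs] using hn
  filter_upwards [hGev] with n hn
  have henergy : energy k (ν n) = sintegral (ν n) (F n) := rfl
  rw [henergy, Real.norm_eq_abs]
  calc |sintegral (ν n) (F n)|
      ≤ |sintegral (ν n) (G n)| + |sintegral (ν n) (F n) - sintegral (ν n) (G n)| := by
        have := abs_sub_abs_le_abs_sub (sintegral (ν n) (F n)) (sintegral (ν n) (G n))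
        have h := abs_add_le (sintegral (ν n) (G n))
          (sintegral (ν n) (F n) - sintegral (ν n) (G n))
        calc |sintegral (ν n) (F n)|
            = |sintegral (ν n) (G n) + (sintegral (ν n) (F n) - sintegral (ν n) (G n))| := by
              ring_nf
          _ ≤ _ := h
    _ < ε / 2 + ε / 2 := by
        have := hEnergyErr n
        have := hεsplit
        linarith [hEnergyErr n]
    _ = ε := by ring
end

section
/- Let X be a separable metric space and k : X × X → ℝ a bounded continuous symmetric kernel that is positive semidefinite, i.e., for every finite family x_1,…,x_m ∈ X and c_1,…,c_m ∈ ℝ one has Σ_{i,j} c_i c_j k(x_i,x_j) ≥ 0. Then for every finite signed Borel measure ν on X, the energy E_k(ν) = ∬ k(x,x') dν(x) dν(x') is nonnegative. -/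
open MeasureTheory Filter Topology

def IsPosSemidefKernel {X : Type*} (k : X × X → ℝ) : Prop :=
  ∀ (m : ℕ) (x : Fin m → X) (c : Fin m → ℝ), 0 ≤ ∑ i, ∑ j, c i * c j * k (x i, x j)

theorem IsPosSemidefKernel.sum_finset_nonneg {X : Type*} {k : X × X → ℝ}
    (hk : IsPosSemidefKernel k) (s : Finset X) (c : X → ℝ) :
    0 ≤ ∑ a ∈ s, ∑ b ∈ s, c a * c b * k (a, b) := by
  let e := s.equivFin
  calc 0 ≤ ∑ i, ∑ j, c (e.symm i) * c (e.symm j) * k (e.symm i, e.symm j) :=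
        hk s.card (fun i => e.symm i) (fun i => c (e.symm i))
    _ = ∑ a : s, ∑ b : s, c a * c b * k (a, b) :=
        Fintype.sum_equiv e.symm _ _ fun _ => Fintype.sum_equiv e.symm _ _ fun _ => rfl
    _ = ∑ a ∈ s, ∑ b ∈ s, c a * c b * k (a, b) := by
        rw [← Finset.sum_coe_sort s]
        exact Fintype.sum_congr _ _ fun a => Finset.sum_coe_sort s (fun b => c a * c b * k (a, b))

namespace MeasureTheory

variable {X Y : Type*} [MeasurableSpace X]

theorem integral_comp_simpleFunc (μ : Measure X) [IsFiniteMeasure μ] (T : SimpleFunc X Y)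
    (g : Y → ℝ) :
    ∫ x, g (T x) ∂μ = ∑ a ∈ T.range, μ.real (T ⁻¹' {a}) * g a := by
  have hcover : (⋃ a ∈ T.range, T ⁻¹' {a}) = Set.univ := by
    rw [Finset.set_biUnion_preimage_singleton, SimpleFunc.coe_range, Set.preimage_range]
  rw [← setIntegral_univ, ← hcover, integral_biUnion_finset T.range
    (fun a _ => T.measurableSet_preimage _) (fun a _ b _ hab => ?_) (fun a _ => ?_)]
  · refine Finset.sum_congr rfl fun a _ => ?_
    rw [setIntegral_congr_fun (T.measurableSet_preimage {a}) (g := fun _ => g a)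
      (fun x (hx : T x = a) => congrArg g hx), setIntegral_const, smul_eq_mul]
  · exact Set.disjoint_iff_forall_ne.2 fun x (hx : T x = a) y (hy : T y = b) hxy =>
      hab (hx ▸ hy ▸ congrArg T hxy)
  · exact (T.map g).integrable_of_isFiniteMeasure.integrableOn

end MeasureTheory

section SignedIntegral

variable {X Y : Type*} [MeasurableSpace X] (ν : SignedMeasure X)

theorem sintegral_comp_simpleFunc (T : SimpleFunc X Y) (g : Y → ℝ) :
    sintegral ν (fun x => g (T x)) = ∑ a ∈ T.range, ν (T ⁻¹' {a}) * g a := by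
  simp only [sintegral, integral_comp_simpleFunc, ← Finset.sum_sub_distrib, ← sub_mul,
    ν.apply_eq_posPart_real_sub_negPart_real (T.measurableSet_preimage _)]

theorem abs_sintegral_le {g : X → ℝ} {C : ℝ} (hg : ∀ x, |g x| ≤ C) :
    |sintegral ν g| ≤ C * ν.totalVariation.real Set.univ := by
  have bound (μ : Measure X) [IsFiniteMeasure μ] : |∫ x, g x ∂μ| ≤ C * μ.real Set.univ :=
    norm_integral_le_of_norm_le_const (f := g) (ae_of_all μ hg)
  calc |sintegral ν g|
      ≤ |∫ x, g x ∂ν.toJordanDecomposition.posPart| +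
          |∫ x, g x ∂ν.toJordanDecomposition.negPart| := abs_sub _ _
    _ ≤ C * ν.toJordanDecomposition.posPart.real Set.univ +
          C * ν.toJordanDecomposition.negPart.real Set.univ := add_le_add (bound _) (bound _)
    _ = C * ν.totalVariation.real Set.univ := by
      rw [SignedMeasure.totalVariation, measureReal_add_apply, mul_add]

theorem tendsto_sintegral_of_dominated {F : ℕ → X → ℝ} {f : X → ℝ} {C : ℝ}
    (hF_meas : ∀ n, Measurable (F n)) (hF_bdd : ∀ n x, |F n x| ≤ C)
    (hlim : ∀ x, Tendsto (fun n => F n x) atTop (𝓝 (f x))) :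
    Tendsto (fun n => sintegral ν (F n)) atTop (𝓝 (sintegral ν f)) := by
  have dominated (μ : Measure X) [IsFiniteMeasure μ] :
      Tendsto (fun n => ∫ x, F n x ∂μ) atTop (𝓝 (∫ x, f x ∂μ)) :=
    tendsto_integral_of_dominated_convergence (fun _ => C)
      (fun n => (hF_meas n).aestronglyMeasurable) (integrable_const C)
      (fun n => ae_of_all _ (hF_bdd n)) (ae_of_all _ hlim)
  exact (dominated _).sub (dominated _)

end SignedIntegral

section Energy

variable {X : Type*} [MeasurableSpace X] {k : X × X → ℝ} (ν : SignedMeasure X)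

theorem energy_comp_simpleFunc_nonneg (hk : IsPosSemidefKernel k) (T : SimpleFunc X X) :
    0 ≤ energy (fun p => k (T p.1, T p.2)) ν := by
  have inner (x : X) : sintegral ν (fun y => k (T x, T y)) =
      ∑ b ∈ T.range, ν (T ⁻¹' {b}) * k (T x, b) :=
    sintegral_comp_simpleFunc ν T fun b => k (T x, b)
  simp only [energy, inner]
  rw [sintegral_comp_simpleFunc ν T fun a => ∑ b ∈ T.range, ν (T ⁻¹' {b}) * k (a, b)]
  simpa only [Finset.mul_sum, mul_assoc] using hk.sum_finset_nonneg T.range fun a => ν (T ⁻¹' {a})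

theorem tendsto_energy_comp_simpleFunc [TopologicalSpace X] {M : ℝ} (hk_bdd : ∀ p, |k p| ≤ M)
    (hk_cont : Continuous k) {T : ℕ → SimpleFunc X X}
    (hT : ∀ x, Tendsto (fun n => T n x) atTop (𝓝 x)) :
    Tendsto (fun n => energy (fun p => k (T n p.1, T n p.2)) ν) atTop (𝓝 (energy k ν)) := by
  have inner (x : X) : Tendsto (fun n => sintegral ν fun y => k (T n x, T n y)) atTop
      (𝓝 (sintegral ν fun y => k (x, y))) :=
    tendsto_sintegral_of_dominated ν (fun n => ((T n).map fun b => k (T n x, b)).measurable)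
      (fun _ _ => hk_bdd _) fun y => (hk_cont.tendsto (x, y)).comp ((hT x).prodMk_nhds (hT y))
  exact tendsto_sintegral_of_dominated ν
    (fun n => ((T n).map fun a => sintegral ν fun y => k (a, T n y)).measurable)
    (fun _ _ => abs_sintegral_le ν fun _ => hk_bdd _) inner

end Energy

theorem energy_nonneg_of_posSemidef_general
    {X : Type*} [MetricSpace X] [TopologicalSpace.SeparableSpace X]
    [MeasurableSpace X] [BorelSpace X]
    (k : X × X → ℝ) (hk_bdd : ∃ M, ∀ p, |k p| ≤ M) (hk_cont : Continuous k)
    (hk_psd : ∀ (m : ℕ) (x : Fin m → X) (c : Fin m → ℝ),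
      0 ≤ ∑ i, ∑ j, c i * c j * k (x i, x j))
    (ν : SignedMeasure X) :
    0 ≤ energy k ν := by
  obtain ⟨M, hM⟩ := hk_bdd
  have hid : StronglyMeasurable (id : X → X) := stronglyMeasurable_id
  exact ge_of_tendsto (tendsto_energy_comp_simpleFunc ν hM hk_cont hid.tendsto_approx)
    (Eventually.of_forall fun n => energy_comp_simpleFunc_nonneg ν hk_psd _)

/-- For a bounded continuous symmetric positive semidefinite kernel on a separable
metric space, the energy of every finite signed Borel measure is nonnegative. -/
theorem energy_nonneg_of_posSemidef
    {X : Type*} [MetricSpace X] [TopologicalSpace.SeparableSpace X]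
    [MeasurableSpace X] [BorelSpace X]
    (k : X × X → ℝ) (hk_bdd : ∃ M, ∀ p, |k p| ≤ M) (hk_cont : Continuous k)
    (hk_symm : ∀ x x', k (x, x') = k (x', x))
    (hk_psd : ∀ (m : ℕ) (x : Fin m → X) (c : Fin m → ℝ),
      0 ≤ ∑ i, ∑ j, c i * c j * k (x i, x j))
    (ν : SignedMeasure X) :
    0 ≤ energy k ν :=
  energy_nonneg_of_posSemidef_general k hk_bdd hk_cont hk_psd ν
end
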